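/- Let P be a family of paths on the integer grid, each with at most k bends, forming an EPG representation. Then P satisfies the Helly property if and only if for every set T of three relevant edges of paths in P, the subfamily of paths of P containing at least two of the edges in T has a grid edge common to all its members. -/
import Mathlib


/-- A grid edge: a lattice point together with a direction; `true` means the
horizontal edge from `pt` to `pt + (1,0)`, `false` the vertical edge from `pt`
to `pt + (0,1)`. -/
structure GridEdge where
  pt : ℤ × ℤ
  horiz : Bool
deriving DecidableEq

/-- The two endpoints of a grid edge. -/
def GridEdge.endpoints (e : GridEdge) : Finset (ℤ × ℤ) :=
  {e.pt, if e.horiz then (e.pt.1 + 1, e.pt.2) else (e.pt.1, e.pt.2 + 1)}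

/-- Two distinct grid edges are adjacent when they share an endpoint. -/
def GridEdge.adj (e f : GridEdge) : Prop :=
  e ≠ f ∧ (e.endpoints ∩ f.endpoints).Nonempty

/-- A simple path in the integer grid, given by its sequence of edges:
consecutive edges are adjacent, all edges are distinct, and
non-consecutive edges are non-adjacent. -/
structure GridPath where
  edges : List GridEdge
  nonempty : edges ≠ []
  nodup : edges.Nodup
  chain : edges.Chain' GridEdge.adj
  simple : ∀ i j : ℕ, i + 1 < j → ∀ (hi : i < edges.length) (hj : j < edges.length),
    ¬ GridEdge.adj (edges.get ⟨i, hi⟩) (edges.get ⟨j, hj⟩)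

/-- The number of bends of a grid path: consecutive pairs of edges with
different directions. -/
def GridPath.bends (P : GridPath) : ℕ :=
  ((P.edges.zip P.edges.tail).filter fun q => q.1.horiz != q.2.horiz).length

/-- Two paths (edge-)intersect when they share a grid edge. -/
def GridPath.Inter (P Q : GridPath) : Prop :=
  ∃ e : GridEdge, e ∈ P.edges ∧ e ∈ Q.edges

/-- A relevant edge of a path: an extremity (first or last) edge or a bend edge. -/
def GridPath.IsRelevant (P : GridPath) (e : GridEdge) : Prop :=
  P.edges.head? = some e ∨ P.edges.getLast? = some e ∨
    ∃ q ∈ P.edges.zip P.edges.tail, q.1.horiz ≠ q.2.horiz ∧ (e = q.1 ∨ e = q.2)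

/-- An EPG representation of a graph: vertices are assigned grid paths, and two
distinct vertices are adjacent iff their paths share a grid edge. -/
def IsEPGRep {V : Type*} (G : SimpleGraph V) (P : V → GridPath) : Prop :=
  ∀ u v : V, u ≠ v → (G.Adj u v ↔ (P u).Inter (P v))

/-- The Helly property for a family of grid paths: every pairwise
edge-intersecting subfamily has a grid edge common to all its members. -/
def HellyEPG {ι : Type*} (P : ι → GridPath) : Prop :=
  ∀ T : Set ι, (∀ i ∈ T, ∀ j ∈ T, (P i).Inter (P j)) →
    ∃ e : GridEdge, ∀ i ∈ T, e ∈ (P i).edges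

/-- The set of maximal cliques of a graph. -/
def maxCliques {V : Type*} (G : SimpleGraph V) : Set (Set V) :=
  {s | G.IsClique s ∧ ∀ t : Set V, G.IsClique t → s ⊆ t → s = t}

def GridEdge.left (g : GridEdge) : GridEdge :=
  if g.horiz then ⟨(g.pt.1 - 1, g.pt.2), true⟩ else ⟨(g.pt.1, g.pt.2 - 1), false⟩

def GridEdge.right (g : GridEdge) : GridEdge :=
  if g.horiz then ⟨(g.pt.1 + 1, g.pt.2), true⟩ else ⟨(g.pt.1, g.pt.2 + 1), false⟩

lemma GridEdge.adj_symm {g h : GridEdge} (H : g.adj h) : h.adj g :=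
  ⟨H.1.symm, by rw [Finset.inter_comm]; exact H.2⟩

lemma GridEdge.adj_same_dir {g h : GridEdge} (H : g.adj h) (hd : g.horiz = h.horiz) :
    h = g.left ∨ h = g.right := by
  obtain ⟨hne, p, hp⟩ := H
  rw [Finset.mem_inter] at hp
  obtain ⟨hp1, hp2⟩ := hp
  obtain ⟨⟨a, b⟩, gb⟩ := g
  obtain ⟨⟨c, d⟩, hb⟩ := h
  obtain ⟨p1, p2⟩ := p
  have hd' : gb = hb := hd
  subst hd'
  cases gb <;>
    simp only [GridEdge.endpoints, GridEdge.left, GridEdge.right, GridEdge.mk.injEq,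
      Prod.mk.injEq, Finset.mem_insert, Finset.mem_singleton, ne_eq, and_true,
      Bool.false_eq_true, if_true, if_false, reduceIte, not_and] at hne hp1 hp2 ⊢ <;>
    omega



lemma GridPath.key {Q : GridPath} {m : ℕ} (hm : m < Q.edges.length)
    (hrel : ¬ Q.IsRelevant (Q.edges[m])) :
    ∃ _ : m + 1 < Q.edges.length,
      (Q.edges[m]).left ∈ Q.edges ∧ (Q.edges[m]).right ∈ Q.edges ∧
      (Q.edges[m + 1] = (Q.edges[m]).left ∨ Q.edges[m + 1] = (Q.edges[m]).right) := by
  rw [GridPath.IsRelevant] at hrel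
  push_neg at hrel
  obtain ⟨h1, h2, h3⟩ := hrel
  have hz : ∀ t (ht : t + 1 < Q.edges.length),
      (Q.edges[t], Q.edges[t + 1]) ∈ Q.edges.zip Q.edges.tail := by
    intro t ht
    have hzl : t < (Q.edges.zip Q.edges.tail).length := by
      rw [List.length_zip, List.length_tail]; omega
    have h := List.getElem_mem hzl
    rwa [List.getElem_zip, List.getElem_tail] at h
  have hm0 : m ≠ 0 := by
    rintro rfl
    exact h1 (by rw [List.head?_eq_getElem?, List.getElem?_eq_getElem hm])
  have hmL : m ≠ Q.edges.length - 1 := by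
    intro h
    exact h2 (by rw [List.getLast?_eq_getElem?, ← h, List.getElem?_eq_getElem hm])
  obtain ⟨m', rfl⟩ : ∃ m', m = m' + 1 := ⟨m - 1, by omega⟩
  have hm1 : m' + 1 + 1 < Q.edges.length := by omega
  have hd1 : Q.edges[m'].horiz = Q.edges[m' + 1].horiz := by
    by_contra hc
    exact (h3 _ (hz m' (by omega)) hc).2 rfl
  have hd2 : Q.edges[m' + 1].horiz = Q.edges[m' + 1 + 1].horiz := by
    by_contra hc
    exact (h3 _ (hz (m' + 1) hm1) hc).1 rfl
  have hchain := List.isChain_iff_getElem.mp Q.chain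
  have hadj1 : GridEdge.adj Q.edges[m'] Q.edges[m' + 1] := by
    have h := hchain m' (by omega)
    simpa [List.get_eq_getElem] using h
  have hadj2 : GridEdge.adj Q.edges[m' + 1] Q.edges[m' + 1 + 1] := by
    have h := hchain (m' + 1) (by omega)
    simpa [List.get_eq_getElem] using h
  have hprev := GridEdge.adj_same_dir (GridEdge.adj_symm hadj1) hd1.symm
  have hnext := GridEdge.adj_same_dir hadj2 hd2
  have hne : Q.edges[m'] ≠ Q.edges[m' + 1 + 1] := by
    intro h
    have := Q.nodup.getElem_inj_iff.mp h
    omega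
  refine ⟨hm1, ?_, ?_, hnext⟩
  · rcases hprev with h | h
    · rw [← h]; exact List.getElem_mem _
    · rcases hnext with h' | h'
      · rw [← h']; exact List.getElem_mem _
      · exact absurd (h.trans h'.symm) hne
  · rcases hprev with h | h
    · rcases hnext with h' | h'
      · exact absurd (h.trans h'.symm) hne
      · rw [← h']; exact List.getElem_mem _
    · rw [← h]; exact List.getElem_mem _

lemma GridPath.mem_of_not_relevant {Q : GridPath} {g : GridEdge}
    (hg : g ∈ Q.edges) (hrel : ¬ Q.IsRelevant g) :
    g.left ∈ Q.edges ∧ g.right ∈ Q.edges := by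
  obtain ⟨m, hm, rfl⟩ := List.getElem_of_mem hg
  obtain ⟨_, h1, h2, _⟩ := GridPath.key hm hrel
  exact ⟨h1, h2⟩


lemma exists_relevant_common {ι : Type*} (P : ι → GridPath) (Q : ι → Prop) (i₀ : ι)
    (hi₀ : Q i₀) :
    ∀ (n m : ℕ) (hm : m < (P i₀).edges.length), (P i₀).edges.length - m ≤ n →
    (∀ i, Q i → ((P i₀).edges[m]'hm) ∈ (P i).edges) →
    ∃ f, (∀ i, Q i → f ∈ (P i).edges) ∧ ∃ j, (P j).IsRelevant f := by
  intro n
  induction n with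
  | zero => intro m hm hle _; omega
  | succ n ih =>
    intro m hm hle hall
    by_cases hrel : ∃ j, Q j ∧ (P j).IsRelevant ((P i₀).edges[m]'hm)
    · exact ⟨_, hall, hrel.imp fun j h => h.2⟩
    · push_neg at hrel
      have hLR := fun i hi => GridPath.mem_of_not_relevant (hall i hi) (hrel i hi)
      obtain ⟨hm1, _, _, hnext⟩ := GridPath.key hm (hrel i₀ hi₀)
      refine ih (m + 1) hm1 (by omega) ?_
      intro i hi
      rcases hnext with h | h
      · rw [h]; exact (hLR i hi).1
      · rw [h]; exact (hLR i hi).2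

lemma upgrade_common {ι : Type*} (P : ι → GridPath) (s : Finset ι) (i₀ : ι) (hi₀ : i₀ ∈ s)
    (e : GridEdge) (he : ∀ i ∈ s, e ∈ (P i).edges) :
    ∃ f, (∀ i ∈ s, f ∈ (P i).edges) ∧ ∃ j, (P j).IsRelevant f := by
  obtain ⟨m, hm, rfl⟩ := List.getElem_of_mem (he i₀ hi₀)
  exact exists_relevant_common P (· ∈ s) i₀ hi₀ _ m hm le_rfl he

lemma gilmore_main {ι : Type*} (P : ι → GridPath)
    (G : ∀ e₁ e₂ e₃ : GridEdge,
        (∃ i, (P i).IsRelevant e₁) → (∃ i, (P i).IsRelevant e₂) →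
        (∃ i, (P i).IsRelevant e₃) →
        ∃ e : GridEdge, ∀ i : ι,
          ((e₁ ∈ (P i).edges ∧ e₂ ∈ (P i).edges) ∨
           (e₁ ∈ (P i).edges ∧ e₃ ∈ (P i).edges) ∨
           (e₂ ∈ (P i).edges ∧ e₃ ∈ (P i).edges)) → e ∈ (P i).edges) :
    ∀ (n : ℕ) (s : Finset ι), s.card ≤ n → s.Nonempty →
      (∀ i ∈ s, ∀ j ∈ s, (P i).Inter (P j)) →
      ∃ f, (∀ i ∈ s, f ∈ (P i).edges) ∧ ∃ j, (P j).IsRelevant f := by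
  classical
  intro n
  induction n with
  | zero =>
    intro s hc hne _
    have := Finset.card_pos.mpr hne
    omega
  | succ n ih =>
    intro s hc hne hpair
    have hpos : 0 < s.card := Finset.card_pos.mpr hne
    by_cases hc1 : s.card = 1
    · obtain ⟨a, rfl⟩ := Finset.card_eq_one.mp hc1
      have hlen : 0 < (P a).edges.length := List.length_pos_iff.mpr (P a).nonempty
      refine upgrade_common P {a} a (Finset.mem_singleton_self a) ((P a).edges[0]) ?_
      intro i hi
      rw [Finset.mem_singleton] at hi
      subst hi
      exact List.getElem_mem _
    · by_cases hc2 : s.card = 2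
      · obtain ⟨a, b, hab, rfl⟩ := Finset.card_eq_two.mp hc2
        obtain ⟨e, he1, he2⟩ := hpair a (by simp) b (by simp)
        refine upgrade_common P {a, b} a (by simp) e ?_
        intro i hi
        rcases Finset.mem_insert.mp hi with h | h
        · subst h; exact he1
        · rw [Finset.mem_singleton] at h; subst h; exact he2
      · have hc3 : 3 ≤ s.card := by omega
        obtain ⟨a, ha⟩ := hne
        have htne : (s.erase a).Nonempty :=
          Finset.card_pos.mp (by rw [Finset.card_erase_of_mem ha]; omega)
        obtain ⟨b, hb⟩ := htne
        have hbs : b ∈ s := Finset.mem_of_mem_erase hb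
        have hba : b ≠ a := Finset.ne_of_mem_erase hb
        have hsub : ∀ t : Finset ι, t ⊆ s → ∀ i ∈ t, ∀ j ∈ t, (P i).Inter (P j) :=
          fun t ht i hi j hj => hpair i (ht hi) j (ht hj)
        obtain ⟨x, hx, hxr⟩ := ih (s.erase a)
          (by rw [Finset.card_erase_of_mem ha]; omega) ⟨b, hb⟩
          (hsub _ (Finset.erase_subset a s))
        obtain ⟨y, hy, hyr⟩ := ih (s.erase b)
          (by rw [Finset.card_erase_of_mem hbs]; omega)
          ⟨a, Finset.mem_erase.mpr ⟨hba.symm, ha⟩⟩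
          (hsub _ (Finset.erase_subset b s))
        have habs : ({a, b} : Finset ι) ⊆ s := by
          intro i hi
          rcases Finset.mem_insert.mp hi with h | h
          · subst h; exact ha
          · rw [Finset.mem_singleton] at h; subst h; exact hbs
        obtain ⟨z, hz, hzr⟩ := ih {a, b}
          (by rw [Finset.card_pair (Ne.symm hba)]; omega) ⟨a, by simp⟩ (hsub _ habs)
        obtain ⟨e, hG⟩ := G x y z hxr hyr hzr
        have he : ∀ i ∈ s, e ∈ (P i).edges := by
          intro i hi
          by_cases hia : i = a
          · subst hia
            exact hG i (Or.inr (Or.inr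
              ⟨hy i (Finset.mem_erase.mpr ⟨hba.symm, ha⟩), hz i (by simp)⟩))
          · by_cases hib : i = b
            · subst hib
              exact hG i (Or.inr (Or.inl
                ⟨hx i (Finset.mem_erase.mpr ⟨hba, hbs⟩), hz i (by simp)⟩))
            · exact hG i (Or.inl
                ⟨hx i (Finset.mem_erase.mpr ⟨hia, hi⟩), hy i (Finset.mem_erase.mpr ⟨hib, hi⟩)⟩)
        exact upgrade_common P s a ha e he

/-- Gilmore's criterion for EPG representations: a family of paths with at most
`k` bends is Helly iff for every three relevant edges, the paths containing at
least two of them have a common grid edge. -/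
theorem helly_iff_gilmore {ι : Type*} [Fintype ι] (k : ℕ) (P : ι → GridPath)
    (hb : ∀ i : ι, (P i).bends ≤ k) :
    HellyEPG P ↔
      ∀ e₁ e₂ e₃ : GridEdge,
        (∃ i, (P i).IsRelevant e₁) → (∃ i, (P i).IsRelevant e₂) →
        (∃ i, (P i).IsRelevant e₃) →
        ∃ e : GridEdge, ∀ i : ι,
          ((e₁ ∈ (P i).edges ∧ e₂ ∈ (P i).edges) ∨
           (e₁ ∈ (P i).edges ∧ e₃ ∈ (P i).edges) ∨
           (e₂ ∈ (P i).edges ∧ e₃ ∈ (P i).edges)) → e ∈ (P i).edges := by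
  constructor
  · intro h e₁ e₂ e₃ _ _ _
    have hpair : ∀ i ∈ {i | (e₁ ∈ (P i).edges ∧ e₂ ∈ (P i).edges) ∨
        (e₁ ∈ (P i).edges ∧ e₃ ∈ (P i).edges) ∨
        (e₂ ∈ (P i).edges ∧ e₃ ∈ (P i).edges)}, ∀ j ∈ {i | (e₁ ∈ (P i).edges ∧ e₂ ∈ (P i).edges) ∨
        (e₁ ∈ (P i).edges ∧ e₃ ∈ (P i).edges) ∨
        (e₂ ∈ (P i).edges ∧ e₃ ∈ (P i).edges)}, (P i).Inter (P j) := by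
      intro i hi j hj
      simp only [Set.mem_setOf_eq] at hi hj
      rcases hi with ⟨a1, a2⟩ | ⟨a1, a2⟩ | ⟨a1, a2⟩ <;>
        rcases hj with ⟨b1, b2⟩ | ⟨b1, b2⟩ | ⟨b1, b2⟩ <;>
        first
          | exact ⟨e₁, a1, b1⟩
          | exact ⟨e₂, a2, b1⟩
          | exact ⟨e₃, a2, b2⟩
          | exact ⟨e₂, a1, b2⟩
          | exact ⟨e₂, a1, b1⟩
    obtain ⟨e, he⟩ := h _ hpair
    exact ⟨e, fun i hi => he i hi⟩
  · intro G T hT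
    rcases T.eq_empty_or_nonempty with rfl | ⟨i₀, hi₀⟩
    · exact ⟨⟨(0, 0), true⟩, fun i hi => absurd hi (Set.notMem_empty i)⟩
    · obtain ⟨f, hf, _⟩ := gilmore_main P G ((Set.toFinite T).toFinset.card)
        (Set.toFinite T).toFinset le_rfl ⟨i₀, (Set.toFinite T).mem_toFinset.mpr hi₀⟩
        (fun i hi j hj => hT i ((Set.toFinite T).mem_toFinset.mp hi)
          j ((Set.toFinite T).mem_toFinset.mp hj))
      exact ⟨f, fun i hi => hf i ((Set.toFinite T).mem_toFinset.mpr hi)⟩
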